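/- The formula ¬○p ∧ ¬○¬p is satisfiable in an intuitionistic dynamic model. Specifically, in the model M with W = {w,v,u}, where x ≼ y iff x = y or (x = v and y = u), S(w) = v, S(v) = v, S(u) = u, and V(u) = {p}, V(w) = V(v) = ∅, we have M,w ⊨ ¬○p ∧ ¬○¬p. -/

import Mathlib

/-!
Since `w` has no proper `≼`-successor, `¬○φ` holds at `w` exactly when `φ` fails at
`S(w) = v`. Now `p` fails at `v`, and so does `¬p`, because `v ≼ u` and `p` holds at `u`:
intuitionistic negation sees the future point `u`, which classical negation cannot.
-/

inductive Fml (P : Type) : Type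
  | var (p : P)
  | bot
  | and (φ ψ : Fml P)
  | or (φ ψ : Fml P)
  | impl (φ ψ : Fml P)
  | next (φ : Fml P)
  | dia (φ : Fml P)
  | box (φ : Fml P)

def Fml.neg {P : Type} (φ : Fml P) : Fml P := Fml.impl φ Fml.bot

/-- Intuitionistic temporal satisfaction over an explicit order `le`
    and successor function `S`. -/
def sat {P W : Type} (le : W → W → Prop) (S : W → W) (V : W → P → Prop) :
    Fml P → W → Prop
  | .var p, w => V w p
  | .bot, _ => False
  | .and φ ψ, w => sat le S V φ w ∧ sat le S V ψ w
  | .or φ ψ, w => sat le S V φ w ∨ sat le S V ψ w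
  | .impl φ ψ, w => ∀ v, le w v → sat le S V φ v → sat le S V ψ v
  | .next φ, w => sat le S V φ (S w)
  | .dia φ, w => ∃ k : ℕ, sat le S V φ (S^[k] w)
  | .box φ, w => ∀ k : ℕ, sat le S V φ (S^[k] w)

inductive W3 : Type
  | w | v | u
deriving DecidableEq

def le3 : W3 → W3 → Prop := fun x y => x = y ∨ (x = W3.v ∧ y = W3.u)

def S3 : W3 → W3
  | .w => .v
  | .v => .v
  | .u => .u

def V3 : W3 → Unit → Prop := fun x _ => x = W3.u

section Semantics

variable {P W : Type} {le : W → W → Prop} {S : W → W} {V : W → P → Prop}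

theorem sat_neg_iff {φ : Fml P} {x : W} :
    sat le S V φ.neg x ↔ ∀ y, le x y → ¬ sat le S V φ y :=
  Iff.rfl

theorem sat_neg_of_isMax {φ : Fml P} {x : W} (hx : ∀ y, le x y → y = x)
    (hφ : ¬ sat le S V φ x) : sat le S V φ.neg x :=
  sat_neg_iff.2 fun y hxy => hx y hxy ▸ hφ

end Semantics

namespace W3

theorem le3_refl (x : W3) : le3 x x := Or.inl rfl

theorem le3_trans {a b c : W3} (hab : le3 a b) (hbc : le3 b c) : le3 a c := by
  cases a <;> cases b <;> cases c <;> simp_all [le3]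

theorem le3_antisymm {a b : W3} (hab : le3 a b) (hba : le3 b a) : a = b := by
  cases a <;> cases b <;> simp_all [le3]

theorem le3_S3 {a b : W3} (hab : le3 a b) : le3 (S3 a) (S3 b) := by
  cases a <;> cases b <;> simp_all [le3, S3]

theorem V3_mono {a b : W3} (hab : le3 a b) (q : Unit) (ha : V3 a q) : V3 b q := by
  cases a <;> cases b <;> simp_all [le3, V3]

theorem eq_of_le3_w {x : W3} (hx : le3 w x) : x = w := by
  cases x <;> simp_all [le3]

theorem not_sat_var_v : ¬ sat le3 S3 V3 (Fml.var ()) v := by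
  simp [sat, V3]

theorem not_sat_neg_var_v : ¬ sat le3 S3 V3 (Fml.var ()).neg v :=
  fun h => sat_neg_iff.1 h u (Or.inr ⟨rfl, rfl⟩) rfl

end W3

/-- `(W3, le3, S3, V3)` is an intuitionistic dynamic model (partial order,
    forward confluent, monotone valuation) satisfying `¬○p ∧ ¬○¬p` at `w`. -/
theorem neg_next_and_neg_next_neg_satisfiable :
    (∀ x, le3 x x) ∧
    (∀ a b c, le3 a b → le3 b c → le3 a c) ∧
    (∀ a b, le3 a b → le3 b a → a = b) ∧
    (∀ a b, le3 a b → le3 (S3 a) (S3 b)) ∧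
    (∀ a b, le3 a b → ∀ q, V3 a q → V3 b q) ∧
    sat le3 S3 V3
      (Fml.and (Fml.neg (Fml.next (Fml.var ())))
               (Fml.neg (Fml.next (Fml.neg (Fml.var ()))))) W3.w := by
  refine ⟨W3.le3_refl, fun _ _ _ => W3.le3_trans, fun _ _ => W3.le3_antisymm,
    fun _ _ => W3.le3_S3, fun _ _ => W3.V3_mono, ?_, ?_⟩
  · exact sat_neg_of_isMax (fun _ => W3.eq_of_le3_w) W3.not_sat_var_v
  · exact sat_neg_of_isMax (fun _ => W3.eq_of_le3_w) W3.not_sat_neg_var_v
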